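/- arXiv:2203.07129 — 2 statements merged into one kernel-verified Lean document; each statement's English description precedes it below -/
import Mathlib

section
/- In the monoid B(X) of binary relations on a set X, the inclusion order ⊆ is compatible with multiplication: if μ ⊆ τ and μ' ⊆ τ' then μμ' ⊆ ττ', but the inclusion order contains and does not in general coincide with the natural partial order ≤ (a ≤ b iff a = e b f for projections e, f): for X = {1,2,3,4}, τ = {(1,3),(1,4),(2,3),(2,4)} and μ = {(1,3),(2,4)}, one has μ ⊆ τ but not μ ≤ τ. -/
/-! A restriction `e τ f` of `τ` by projections `e, f` consists of the pairs of `τ` whose source is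
fixed by `e` and whose target is fixed by `f`, so it contains every pair of `τ` whose source and
target already occur in it. The relation `μ` contains `(1,3)` and `(2,4)` but not `(1,4) ∈ τ`. -/

def rcomp {X : Type*} (r s : X → X → Prop) : X → X → Prop :=
  fun x z => ∃ y, r x y ∧ s y z

section Restriction

variable {X : Type*} {e f τ μ : X → X → Prop}

theorem rcomp_mono {μ τ μ' τ' : X → X → Prop} (h : ∀ x y, μ x y → τ x y)
    (h' : ∀ x y, μ' x y → τ' x y) (x y : X) : rcomp μ μ' x y → rcomp τ τ' x y :=
  fun ⟨z, hxz, hzy⟩ => ⟨z, h x z hxz, h' z y hzy⟩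

theorem rcomp_rcomp_iff_of_le_id (he : ∀ x y, e x y → x = y) (hf : ∀ x y, f x y → x = y)
    (x y : X) : rcomp e (rcomp τ f) x y ↔ e x x ∧ τ x y ∧ f y y := by
  constructor
  · rintro ⟨a, hxa, b, hab, hby⟩
    obtain rfl := he x a hxa
    obtain rfl := hf b y hby
    exact ⟨hxa, hab, hby⟩
  · rintro ⟨hxx, hxy, hyy⟩
    exact ⟨x, hxx, y, hxy, hyy⟩

theorem rectangle_closed_of_eq_restriction (he : ∀ x y, e x y → x = y)
    (hf : ∀ x y, f x y → x = y) (hμ : μ = rcomp e (rcomp τ f)) {x y x' y' : X}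
    (hxy : μ x y) (hxy' : μ x' y') (hτ : τ x y') : μ x y' := by
  subst hμ
  rw [rcomp_rcomp_iff_of_le_id he hf] at hxy hxy' ⊢
  exact ⟨hxy.1, hτ, hxy'.2.2⟩

end Restriction

/-- In B(X) the inclusion order is compatible with multiplication, but it does not
coincide with the natural partial order: for X = {1,2,3,4},
τ = {(1,3),(1,4),(2,3),(2,4)} and μ = {(1,3),(2,4)} we have μ ⊆ τ but not μ ≤ τ. -/
theorem stmt11 :
    (∀ (X : Type*) (μ τ μ' τ' : X → X → Prop),
      (∀ x y, μ x y → τ x y) → (∀ x y, μ' x y → τ' x y) →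
      ∀ x y, rcomp μ μ' x y → rcomp τ τ' x y) ∧
    (let τ : Fin 4 → Fin 4 → Prop := fun x y => (x = 0 ∨ x = 1) ∧ (y = 2 ∨ y = 3)
     let μ : Fin 4 → Fin 4 → Prop := fun x y => (x = 0 ∧ y = 2) ∨ (x = 1 ∧ y = 3)
     (∀ x y, μ x y → τ x y) ∧
     ¬ ∃ e f : Fin 4 → Fin 4 → Prop,
        (∀ x y, e x y → x = y) ∧ (∀ x y, f x y → x = y) ∧
        μ = rcomp e (rcomp τ f)) := by
  refine ⟨fun _ _ _ _ _ => rcomp_mono, ?_⟩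
  intro τ μ
  refine ⟨by decide, ?_⟩
  rintro ⟨e, f, he, hf, hμ⟩
  have h03 : μ 0 3 :=
    rectangle_closed_of_eq_restriction he hf hμ (Or.inl ⟨rfl, rfl⟩) (Or.inr ⟨rfl, rfl⟩)
      ⟨Or.inl rfl, Or.inr rfl⟩
  revert h03
  decide
end

section
/- Right partial actions of a monoid T on a set X are in bijective correspondence with partial multiactions of T on X satisfying the left determinism condition (LD): for all t ∈ T and x ∈ X there exists at most one y ∈ X with (x,t,y) an edge. -/
/-!
An action is recorded by its graph `{(x, t, x·t)}`. Conversely, (LD) says that the edges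
labelled `t` out of `x` have at most one target, which is then `x·t`; under this dictionary
loops correspond to `x·1 = x` and closure under composition to `(x·s)·t = x·(st)`.
-/

/-- A partial multiaction of a monoid T on a set X. -/
structure PartialMultiaction (T X : Type*) [Monoid T] where
  E : Set (X × T × X)
  loops : ∀ x : X, (x, (1 : T), x) ∈ E
  lbl : ∀ t : T, ∃ x y : X, (x, t, y) ∈ E
  comp : ∀ (x y z : X) (s t : T), (x, s, y) ∈ E → (y, t, z) ∈ E → (x, s * t, z) ∈ E

/-- A right partial action of a monoid T on a set X. -/
structure RightPartialAction (T X : Type*) [Monoid T] where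
  act : X → T → Option X
  total : ∀ t : T, ∃ x : X, (act x t).isSome
  one : ∀ x : X, act x 1 = some x
  assoc : ∀ (x : X) (s t : T) (y z : X),
    act x s = some y → act y t = some z → act x (s * t) = some z

section

variable {T X : Type*} [Monoid T]

namespace PartialMultiaction

theorem ext {G H : PartialMultiaction T X} (h : G.E = H.E) : G = H := by
  cases G; cases H; congr

def LeftDeterministic (G : PartialMultiaction T X) : Prop :=
  ∀ (t : T) (x y y' : X), (x, t, y) ∈ G.E → (x, t, y') ∈ G.E → y = y'

open Classical in
noncomputable def targetOf (G : PartialMultiaction T X) (x : X) (t : T) : Option X :=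
  if h : ∃ y, (x, t, y) ∈ G.E then some h.choose else none

theorem targetOf_eq_some_iff {G : PartialMultiaction T X} (hG : G.LeftDeterministic)
    {x : X} {t : T} {y : X} : G.targetOf x t = some y ↔ (x, t, y) ∈ G.E := by
  unfold targetOf
  split_ifs with h
  · exact ⟨fun hy => Option.some_inj.mp hy ▸ h.choose_spec,
      fun hy => congrArg some (hG t x _ _ h.choose_spec hy)⟩
  · exact ⟨nofun, fun hy => (h ⟨y, hy⟩).elim⟩

noncomputable def toRightPartialAction (G : PartialMultiaction T X) (hG : G.LeftDeterministic) :
    RightPartialAction T X where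
  act := G.targetOf
  total t := by
    obtain ⟨x, y, hxy⟩ := G.lbl t
    exact ⟨x, Option.isSome_iff_exists.mpr ⟨y, (targetOf_eq_some_iff hG).mpr hxy⟩⟩
  one x := (targetOf_eq_some_iff hG).mpr (G.loops x)
  assoc x s t y z hs ht := (targetOf_eq_some_iff hG).mpr <|
    G.comp x y z s t ((targetOf_eq_some_iff hG).mp hs) ((targetOf_eq_some_iff hG).mp ht)

end PartialMultiaction

namespace RightPartialAction

theorem ext {a b : RightPartialAction T X} (h : a.act = b.act) : a = b := by
  cases a; cases b; congr

def toPartialMultiaction (a : RightPartialAction T X) : PartialMultiaction T X where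
  E := {p | a.act p.1 p.2.1 = some p.2.2}
  loops := a.one
  lbl t := by
    obtain ⟨x, hx⟩ := a.total t
    obtain ⟨y, hy⟩ := Option.isSome_iff_exists.mp hx
    exact ⟨x, y, hy⟩
  comp x y z s t := a.assoc x s t y z

theorem mem_toPartialMultiaction {a : RightPartialAction T X} {x : X} {t : T} {y : X} :
    (x, t, y) ∈ a.toPartialMultiaction.E ↔ a.act x t = some y :=
  Iff.rfl

theorem toPartialMultiaction_leftDeterministic (a : RightPartialAction T X) :
    a.toPartialMultiaction.LeftDeterministic := fun _ _ _ _ hy hy' =>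
  Option.some_inj.mp (hy.symm.trans hy')

noncomputable def equivLeftDeterministic :
    RightPartialAction T X ≃ {G : PartialMultiaction T X // G.LeftDeterministic} where
  toFun a := ⟨a.toPartialMultiaction, a.toPartialMultiaction_leftDeterministic⟩
  invFun G := G.1.toRightPartialAction G.2
  left_inv a := ext <| funext₂ fun _ _ => Option.ext fun _ =>
    PartialMultiaction.targetOf_eq_some_iff a.toPartialMultiaction_leftDeterministic
  right_inv G := Subtype.ext <| PartialMultiaction.ext <| Set.ext fun _ =>
    PartialMultiaction.targetOf_eq_some_iff G.2

end RightPartialAction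

end

/-- Right partial actions of T on X are in bijective correspondence with partial
multiactions of T on X satisfying the left determinism condition (LD), with edges
given by (x, t, x·t). -/
theorem stmt17 {T X : Type*} [Monoid T] :
    ∃ e : RightPartialAction T X ≃
      {G : PartialMultiaction T X //
        ∀ (t : T) (x y y' : X), (x, t, y) ∈ G.E → (x, t, y') ∈ G.E → y = y'},
      ∀ (a : RightPartialAction T X) (x : X) (t : T) (y : X),
        (x, t, y) ∈ (e a).1.E ↔ a.act x t = some y :=
  ⟨RightPartialAction.equivLeftDeterministic, fun _ _ _ _ =>
    RightPartialAction.mem_toPartialMultiaction⟩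
end
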